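/- arXiv:2503.07566 — 2 statements merged into one kernel-verified Lean document; each statement's English description precedes it below -/
import Mathlib

section
/- Let p ∈ [0,1], δ > 0, and let f : ℝ^n → ℝ be differentiable and (L,p)-Hölder smooth. Let L_δ be any constant with L_δ ≥ ((1−p)/((1+p)δ))^{(1−p)/(1+p)} · L^{2/(1+p)}, with the convention that the first factor equals 1 when p = 1. Then for all x, y ∈ ℝ^n, f(y) ≤ f(x) + ⟨∇f(x), y − x⟩ + (L_δ/2)‖y − x‖² + δ/2. -/
/-!
On the segment from `x` to `y = x + v` the Hölder bound gives
`⟪∇f(x + t v) - ∇f(x), v⟫ ≤ L ‖v‖^{1+p} t^p`; comparing derivatives on `[0, 1]` (not integrating: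
for `p = 0` the gradient need not be continuous) yields
`f(y) ≤ f(x) + ⟪∇f(x), v⟫ + L/(1+p) ‖v‖^{1+p}`. Weighted AM–GM with weights `(1+p)/2` and
`(1-p)/2` then splits the power term into a quadratic term and `δ/2`.
-/

open scoped RealInnerProductSpace

section HolderGradient

variable {E : Type*} [NormedAddCommGroup E] [InnerProductSpace ℝ E]

theorem inner_sub_le_mul_rpow_of_holder {L p : ℝ} (hp : 0 ≤ p) {f' : E → E}
    (hHolder : ∀ x y, ‖f' x - f' y‖ ≤ L * ‖x - y‖ ^ p) (x v : E) {t : ℝ} (ht : 0 ≤ t) :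
    ⟪f' (x + t • v) - f' x, v⟫ ≤ L * ‖v‖ ^ (1 + p) * t ^ p :=
  calc ⟪f' (x + t • v) - f' x, v⟫
      ≤ ‖f' (x + t • v) - f' x‖ * ‖v‖ := real_inner_le_norm _ _
    _ ≤ L * ‖t • v‖ ^ p * ‖v‖ := by
        gcongr
        simpa using hHolder (x + t • v) x
    _ = L * ‖v‖ ^ (1 + p) * t ^ p := by
        rw [norm_smul, Real.norm_of_nonneg ht, Real.mul_rpow ht (norm_nonneg v),
          Real.rpow_one_add' (norm_nonneg v) (by linarith)]
        ring

variable [CompleteSpace E]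

theorem HasGradientAt.hasDerivAt_comp_add_smul {f : E → ℝ} {x v : E} {t : ℝ} {g : E}
    (hf : HasGradientAt f g (x + t • v)) :
    HasDerivAt (fun s : ℝ => f (x + s • v)) ⟪g, v⟫ t := by
  have hline : HasDerivAt (fun s : ℝ => x + s • v) v t := by
    simpa using ((hasDerivAt_id t).smul_const v).const_add x
  have h := hf.hasFDerivAt.comp_hasDerivAt t hline
  simp only [Function.comp_def, InnerProductSpace.toDual_apply_apply] at h
  exact h

theorem le_add_inner_add_rpow_of_holder {L p : ℝ} (hp : 0 ≤ p) {f : E → ℝ} {f' : E → E}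
    (hf : ∀ x, HasGradientAt f (f' x) x)
    (hHolder : ∀ x y, ‖f' x - f' y‖ ≤ L * ‖x - y‖ ^ p) (x y : E) :
    f y ≤ f x + ⟪f' x, y - x⟫ + L / (1 + p) * ‖y - x‖ ^ (1 + p) := by
  set v := y - x
  have hp' : 0 < 1 + p := by linarith
  set C := L * ‖v‖ ^ (1 + p)
  have hφ : ∀ t : ℝ, HasDerivAt (fun s => f (x + s • v) - s * ⟪f' x, v⟫)
      (⟪f' (x + t • v), v⟫ - ⟪f' x, v⟫) t := fun t =>
    (hf _).hasDerivAt_comp_add_smul.sub (hasDerivAt_mul_const _)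
  have hB : ∀ t : ℝ, HasDerivAt (fun s => f x + C / (1 + p) * s ^ (1 + p)) (C * t ^ p) t := by
    intro t
    have hpow := Real.hasDerivAt_rpow_const (x := t) (Or.inr (le_add_of_nonneg_right hp))
    refine ((hpow.const_mul _).const_add _).congr_deriv ?_
    rw [add_sub_cancel_left]
    field_simp
  have hcompare := image_le_of_deriv_right_le_deriv_boundary (a := 0) (b := 1)
    (fun t _ => (hφ t).continuousAt.continuousWithinAt)
    (fun t _ => (hφ t).hasDerivWithinAt)
    (by simp [Real.zero_rpow hp'.ne'])
    (fun t _ => (hB t).continuousAt.continuousWithinAt)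
    (fun t _ => (hB t).hasDerivWithinAt)
    (fun t ht => by
      rw [← inner_sub_left]
      exact inner_sub_le_mul_rpow_of_holder hp hHolder x v ht.1)
    (Set.right_mem_Icc.2 zero_le_one)
  simp only [one_smul, one_mul, Real.one_rpow, mul_one, v, add_sub_cancel] at hcompare
  linarith [show C / (1 + p) = L / (1 + p) * ‖v‖ ^ (1 + p) by ring]

end HolderGradient

theorem div_mul_rpow_one_add_le_of_lt_one {L p δ t : ℝ} (hL : 0 ≤ L) (hp0 : 0 ≤ p) (hp1 : p < 1)
    (hδ : 0 < δ) (ht : 0 ≤ t) :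
    L / (1 + p) * t ^ (1 + p) ≤
      ((1 - p) / ((1 + p) * δ)) ^ ((1 - p) / (1 + p)) * L ^ (2 / (1 + p)) / 2 * t ^ 2
        + δ / 2 := by
  have hp' : 0 < 1 + p := by linarith
  have hq : 0 < 1 - p := by linarith
  set θ := (1 + p) / 2 with hθ
  set κ := (1 - p) / ((1 + p) * δ) with hκ
  -- the coefficient for which the weighted geometric mean in `hamgm` is `L / (1 + p) * t ^ (1 + p)`
  set M := κ ^ ((1 - p) / (1 + p)) * L ^ (2 / (1 + p))
  have hκ_nonneg : 0 ≤ κ := by positivity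
  have hM : 0 ≤ M := by positivity
  have hMθ : M ^ θ = κ ^ (1 - θ) * L := by
    rw [Real.mul_rpow (by positivity) (by positivity), ← Real.rpow_mul hκ_nonneg,
      ← Real.rpow_mul hL]
    congr 1
    · rw [hθ]; field_simp; congr 1; ring
    · rw [show 2 / (1 + p) * θ = 1 by rw [hθ]; field_simp, Real.rpow_one]
  have hκδ : κ * (δ / (1 - p)) = (1 + p)⁻¹ := by rw [hκ]; field_simp
  have hweights : (M / (1 + p)) ^ θ * (δ / (1 - p)) ^ (1 - θ) = L / (1 + p) :=
    calc (M / (1 + p)) ^ θ * (δ / (1 - p)) ^ (1 - θ)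
        = L * (κ * (δ / (1 - p))) ^ (1 - θ) / (1 + p) ^ θ := by
          rw [Real.div_rpow hM hp'.le, hMθ, Real.mul_rpow hκ_nonneg (by positivity)]; ring
      _ = L / ((1 + p) ^ θ * (1 + p) ^ (1 - θ)) := by
          rw [hκδ, Real.inv_rpow hp'.le]; field_simp
      _ = L / (1 + p) := by rw [← Real.rpow_add hp', add_sub_cancel, Real.rpow_one]
  have hamgm := Real.geom_mean_le_arith_mean2_weighted (w₁ := θ) (w₂ := 1 - θ)
    (p₁ := M / (1 + p) * t ^ 2) (p₂ := δ / (1 - p)) (by positivity) (by rw [hθ]; linarith)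
    (by positivity) (by positivity) (add_sub_cancel θ 1)
  have hsq : (t ^ 2) ^ θ = t ^ (1 + p) := by
    rw [← Real.rpow_natCast, ← Real.rpow_mul ht]; congr 1; push_cast; ring
  calc L / (1 + p) * t ^ (1 + p)
      = (M / (1 + p) * t ^ 2) ^ θ * (δ / (1 - p)) ^ (1 - θ) := by
        rw [Real.mul_rpow (by positivity) (by positivity), hsq, ← hweights]; ring
    _ ≤ θ * (M / (1 + p) * t ^ 2) + (1 - θ) * (δ / (1 - p)) := hamgm
    _ = M / 2 * t ^ 2 + δ / 2 := by field_simp; ring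

theorem div_mul_rpow_one_add_le {L p δ t : ℝ} (hL : 0 ≤ L) (hp0 : 0 ≤ p) (hp1 : p ≤ 1)
    (hδ : 0 < δ) (ht : 0 ≤ t) :
    L / (1 + p) * t ^ (1 + p) ≤
      ((1 - p) / ((1 + p) * δ)) ^ ((1 - p) / (1 + p)) * L ^ (2 / (1 + p)) / 2 * t ^ 2
        + δ / 2 := by
  rcases hp1.lt_or_eq with hp1 | rfl
  · exact div_mul_rpow_one_add_le_of_lt_one hL hp0 hp1 hδ ht
  · norm_num
    linarith

/-- Nesterov's approximate-smoothness lemma: if `f : ℝ^n → ℝ` is `(L,p)`-Hölder smooth and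
`L_δ ≥ ((1−p)/((1+p)δ))^{(1−p)/(1+p)} · L^{2/(1+p)}` (the first factor being `1` when `p = 1`,
as `Real.rpow` gives `0^0 = 1`), then
`f(y) ≤ f(x) + ⟨∇f(x), y − x⟩ + (L_δ/2)‖y − x‖² + δ/2` for all `x, y`. -/
theorem stmt2 {n : ℕ} (L p δ Lδ : ℝ) (hL : 0 ≤ L) (hp0 : 0 ≤ p) (hp1 : p ≤ 1) (hδ : 0 < δ)
    (hLδ : ((1 - p) / ((1 + p) * δ)) ^ ((1 - p) / (1 + p)) * L ^ (2 / (1 + p)) ≤ Lδ)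
    (f : EuclideanSpace ℝ (Fin n) → ℝ)
    (f' : EuclideanSpace ℝ (Fin n) → EuclideanSpace ℝ (Fin n))
    (hdiff : ∀ x, HasGradientAt f (f' x) x)
    (hHolder : ∀ x y, ‖f' x - f' y‖ ≤ L * ‖x - y‖ ^ p) :
    ∀ x y, f y ≤ f x + ⟪f' x, y - x⟫ + Lδ / 2 * ‖y - x‖ ^ 2 + δ / 2 := by
  intro x y
  have descent := le_add_inner_add_rpow_of_holder hp0 hdiff hHolder x y
  have young := div_mul_rpow_one_add_le hL hp0 hp1 hδ (norm_nonneg (y - x))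
  have hconst : ((1 - p) / ((1 + p) * δ)) ^ ((1 - p) / (1 + p)) * L ^ (2 / (1 + p)) / 2
      * ‖y - x‖ ^ 2 ≤ Lδ / 2 * ‖y - x‖ ^ 2 := by gcongr
  linarith
end

section
/- Let X ⊆ ℝ^n be convex, u : ℝ^n → ℝ convex, g = (g_1, …, g_m) : ℝ^n → ℝ^m with each g_j convex, and h : ℝ^m → ℝ ∪ {+∞} proper convex with Fenchel conjugate h*. Suppose (x⋆, λ⋆) with x⋆ ∈ X, h(g(x⋆)) < +∞ and λ⋆ ∈ dom h* is a saddle point: for all x ∈ X and all λ ∈ dom h*, ⟨λ, g(x⋆)⟩ − h*(λ) + u(x⋆) ≤ ⟨λ⋆, g(x⋆)⟩ − h*(λ⋆) + u(x⋆) ≤ ⟨λ⋆, g(x)⟩ − h*(λ⋆) + u(x). Let ε > 0, r > 0, x^t ∈ X, λ^t ∈ dom h*, and let ĝ ∈ ℝ^m and λ̂ ∈ ℝ^m satisfy: λ̂ ∈ ∂h(ĝ); and either ĝ = g(x^t) with ‖λ̂ − λ⋆‖ ≤ r, or λ̂ = λ⋆ + r(g(x^t) − ĝ)/‖g(x^t)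 − ĝ‖. If [⟨λ̂, g(x^t)⟩ − h*(λ̂) + u(x^t)] − [⟨λ^t, g(x⋆)⟩ − h*(λ^t) + u(x⋆)] ≤ ε, then both: (i) u(x^t) + h(ĝ) + ⟨λ̂, g(x^t) − ĝ⟩ ≤ h(g(x⋆)) + u(x⋆) + ε, and (ii) r‖g(x^t) − ĝ‖ ≤ ε. -/
open scoped RealInnerProductSpace

/-- Fenchel conjugate of an extended-real-valued function on `ℝ^m`. -/
noncomputable def fenchelConj {m : ℕ} (h : EuclideanSpace ℝ (Fin m) → EReal)
    (s : EuclideanSpace ℝ (Fin m)) : EReal :=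
  ⨆ z : EuclideanSpace ℝ (Fin m), ((⟪s, z⟫ : ℝ) : EReal) - h z

/-- If the gap quantity
`[⟨λ̂, g(x^t)⟩ − h*(λ̂) + u(x^t)] − [⟨λ^t, g(x⋆)⟩ − h*(λ^t) + u(x⋆)]` is at most `ε`,
then `x^t` is `(ε,r)`-optimal: (i) the `λ̂`-linearized objective value at `x^t` exceeds the
optimal value `h(g(x⋆)) + u(x⋆)` by at most `ε`, and (ii) `r‖g(x^t) − ĝ‖ ≤ ε`. -/
theorem stmt6 {n m : ℕ}
    (X : Set (EuclideanSpace ℝ (Fin n))) (hX : Convex ℝ X)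
    (u : EuclideanSpace ℝ (Fin n) → ℝ) (hu : ConvexOn ℝ Set.univ u)
    (g : EuclideanSpace ℝ (Fin n) → EuclideanSpace ℝ (Fin m))
    (hg : ∀ j, ConvexOn ℝ Set.univ (fun x => g x j))
    (h : EuclideanSpace ℝ (Fin m) → EReal)
    (hproper_top : ∃ z, h z ≠ ⊤) (hproper_bot : ∀ z, h z ≠ ⊥)
    (hconv : ∀ z w : EuclideanSpace ℝ (Fin m), ∀ a b : ℝ, 0 < a → 0 < b → a + b = 1 →
      h (a • z + b • w) ≤ (a : EReal) * h z + (b : EReal) * h w)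
    (xstar : EuclideanSpace ℝ (Fin n)) (hxstarX : xstar ∈ X) (hxstar_dom : h (g xstar) < ⊤)
    (lamstar : EuclideanSpace ℝ (Fin m)) (hlamstar_dom : fenchelConj h lamstar < ⊤)
    (hsaddle1 : ∀ lam : EuclideanSpace ℝ (Fin m), fenchelConj h lam < ⊤ →
      ((⟪lam, g xstar⟫ : ℝ) : EReal) - fenchelConj h lam + (u xstar : EReal)
        ≤ ((⟪lamstar, g xstar⟫ : ℝ) : EReal) - fenchelConj h lamstar + (u xstar : EReal))
    (hsaddle2 : ∀ x ∈ X,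
      ((⟪lamstar, g xstar⟫ : ℝ) : EReal) - fenchelConj h lamstar + (u xstar : EReal)
        ≤ ((⟪lamstar, g x⟫ : ℝ) : EReal) - fenchelConj h lamstar + (u x : EReal))
    (ε r : ℝ) (hε : 0 < ε) (hr : 0 < r)
    (xt : EuclideanSpace ℝ (Fin n)) (hxt : xt ∈ X)
    (lamt : EuclideanSpace ℝ (Fin m)) (hlamt_dom : fenchelConj h lamt < ⊤)
    (ghat lamhat : EuclideanSpace ℝ (Fin m))
    (hghat_fin : h ghat < ⊤)
    (hsubgrad : ∀ w, h ghat + ((⟪lamhat, w - ghat⟫ : ℝ) : EReal) ≤ h w)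
    (hcase : (ghat = g xt ∧ ‖lamhat - lamstar‖ ≤ r) ∨
      lamhat = lamstar + (r / ‖g xt - ghat‖) • (g xt - ghat))
    (hQ : (((⟪lamhat, g xt⟫ : ℝ) : EReal) - fenchelConj h lamhat + (u xt : EReal))
        - (((⟪lamt, g xstar⟫ : ℝ) : EReal) - fenchelConj h lamt + (u xstar : EReal))
        ≤ (ε : EReal)) :
    (u xt : EReal) + h ghat + ((⟪lamhat, g xt - ghat⟫ : ℝ) : EReal)
        ≤ h (g xstar) + ((u xstar + ε : ℝ) : EReal)
    ∧ r * ‖g xt - ghat‖ ≤ ε := by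

  obtain ⟨z₀, hz₀⟩ := hproper_top
  -- Fenchel–Young: ⟪lam, z⟫ - h z ≤ h* lam
  have hFY : ∀ lam z : EuclideanSpace ℝ (Fin m),
      ((⟪lam, z⟫ : ℝ) : EReal) - h z ≤ fenchelConj h lam := fun lam z =>
    le_iSup (fun z => ((⟪lam, z⟫ : ℝ) : EReal) - h z) z
  have hne_bot : ∀ lam, fenchelConj h lam ≠ ⊥ := by
    intro lam hb
    have h1 := hFY lam z₀
    have hz₀' : h z₀ = ((h z₀).toReal : EReal) := (EReal.coe_toReal hz₀ (hproper_bot z₀)).symm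
    rw [hb, hz₀', ← EReal.coe_sub, le_bot_iff] at h1
    exact EReal.coe_ne_bot _ h1
  have hA : h ghat = ((h ghat).toReal : EReal) :=
    (EReal.coe_toReal hghat_fin.ne (hproper_bot ghat)).symm
  set A : ℝ := (h ghat).toReal with hAdef
  have hC : h (g xstar) = (((h (g xstar)).toReal : ℝ) : EReal) :=
    (EReal.coe_toReal hxstar_dom.ne (hproper_bot (g xstar))).symm
  set C : ℝ := (h (g xstar)).toReal with hCdef
  have hSs : fenchelConj h lamstar = (((fenchelConj h lamstar).toReal : ℝ) : EReal) :=
    (EReal.coe_toReal hlamstar_dom.ne (hne_bot lamstar)).symm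
  set Ss : ℝ := (fenchelConj h lamstar).toReal with hSsdef
  have hSt : fenchelConj h lamt = (((fenchelConj h lamt).toReal : ℝ) : EReal) :=
    (EReal.coe_toReal hlamt_dom.ne (hne_bot lamt)).symm
  set St : ℝ := (fenchelConj h lamt).toReal with hStdef
  -- exact value of h* at lamhat
  have hconj_hat : fenchelConj h lamhat = ((⟪lamhat, ghat⟫ - A : ℝ) : EReal) := by
    apply le_antisymm
    · apply iSup_le
      intro z
      by_cases hz : h z = ⊤
      · rw [hz, EReal.sub_top]; exact bot_le
      · have hzr : h z = ((h z).toReal : EReal) := (EReal.coe_toReal hz (hproper_bot z)).symm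
        have hsub := hsubgrad z
        rw [hzr, hA, ← EReal.coe_add, EReal.coe_le_coe_iff] at hsub
        rw [hzr, ← EReal.coe_sub, EReal.coe_le_coe_iff]
        have hir : ⟪lamhat, z - ghat⟫ = ⟪lamhat, z⟫ - ⟪lamhat, ghat⟫ := inner_sub_right _ _ _
        rw [hir] at hsub
        linarith
    · have h1 := hFY lamhat ghat
      rwa [hA, ← EReal.coe_sub] at h1
  -- real-valued Fenchel–Young instances
  have hFY1 : ⟪lamt, g xstar⟫ - C ≤ St := by
    have h1 := hFY lamt (g xstar)
    rw [hC, hSt, ← EReal.coe_sub, EReal.coe_le_coe_iff] at h1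
    exact h1
  have hFY2 : ⟪lamstar, ghat⟫ - A ≤ Ss := by
    have h1 := hFY lamstar ghat
    rw [hA, hSs, ← EReal.coe_sub, EReal.coe_le_coe_iff] at h1
    exact h1
  -- real version of hQ
  have hQr : (⟪lamhat, g xt⟫ - (⟪lamhat, ghat⟫ - A) + u xt)
      - (⟪lamt, g xstar⟫ - St + u xstar) ≤ ε := by
    rw [hconj_hat, hSt, ← EReal.coe_sub, ← EReal.coe_add, ← EReal.coe_sub, ← EReal.coe_add,
      ← EReal.coe_sub, EReal.coe_le_coe_iff] at hQ
    exact hQ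
  -- real version of saddle1 at lamt
  have hS1 : ⟪lamt, g xstar⟫ - St + u xstar ≤ ⟪lamstar, g xstar⟫ - Ss + u xstar := by
    have h1 := hsaddle1 lamt hlamt_dom
    rw [hSt, hSs, ← EReal.coe_sub, ← EReal.coe_add, ← EReal.coe_sub, ← EReal.coe_add,
      EReal.coe_le_coe_iff] at h1
    exact h1
  -- real version of saddle2 at xt
  have hS2 : ⟪lamstar, g xstar⟫ - Ss + u xstar ≤ ⟪lamstar, g xt⟫ - Ss + u xt := by
    have h1 := hsaddle2 xt hxt
    rw [hSs, ← EReal.coe_sub, ← EReal.coe_add, ← EReal.coe_sub, ← EReal.coe_add,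
      EReal.coe_le_coe_iff] at h1
    exact h1
  have hir2 : ⟪lamhat, g xt - ghat⟫ = ⟪lamhat, g xt⟫ - ⟪lamhat, ghat⟫ := inner_sub_right _ _ _
  constructor
  · -- part (i)
    rw [hA, hC, ← EReal.coe_add, ← EReal.coe_add, ← EReal.coe_add, EReal.coe_le_coe_iff, hir2]
    linarith
  · -- part (ii)
    rcases hcase with ⟨hgeq, -⟩ | hlam
    · rw [← hgeq, sub_self, norm_zero, mul_zero]; linarith
    · by_cases hzero : g xt - ghat = 0
      · rw [hzero, norm_zero, mul_zero]; linarith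
      · set t : ℝ := ‖g xt - ghat‖ with htdef
        have ht : 0 < t := norm_pos_iff.mpr hzero
        have hip : ⟪lamhat, g xt - ghat⟫ = ⟪lamstar, g xt - ghat⟫ + r * t := by
          rw [hlam, inner_add_left, real_inner_smul_left, real_inner_self_eq_norm_sq]
          rw [← htdef]
          field_simp
        have hir3 : ⟪lamstar, g xt - ghat⟫ = ⟪lamstar, g xt⟫ - ⟪lamstar, ghat⟫ :=
          inner_sub_right _ _ _
        rw [hir2, hir3] at hip
        nlinarith [hQr, hS1, hS2, hFY2, hip]
end
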